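/- For every odd integer s and every positive integer l, the third derivative of the Fibonacci polynomial satisfies F'''_{3·2^l}(s) ≡ 0, F'''_{3·2^l+1}(s) ≡ 0, and F'''_{3·2^l+2}(s) ≡ 2^l (mod 2^{l+1}). -/

import Mathlib

/-!
Expand around the odd point `s`, i.e. work with `taylor s`, modulo `X ^ 4`. With the Lucas
polynomial `L n = F (n + 1) + F (n - 1)` one has `F (2n) = F n * L n` and, for even `n`,
`L (2n) = L n ^ 2 - 2`. For `n = 3 * 2 ^ (k + 1)` the expansions have the shape
`F n ≡ 2 ^ k * (2 X² + 2 X³)` and `L n ≡ 2` modulo `2 ^ (k + 2)`: this is checked at `n = 6`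
and reproduces itself under doubling. The third derivatives at `s` of `F n`,
`F (n + 1) = (L n + X * F n) / 2` and `F (n + 2)` are six times the `X³`-coefficients of the
expansions, which this shape determines modulo `2 ^ (k + 2)`.
-/

open Polynomial

noncomputable def fibPoly : ℕ → Polynomial ℤ
  | 0 => 0
  | 1 => 1
  | n + 2 => X * fibPoly (n + 1) + fibPoly n

@[simp] theorem fibPoly_zero : fibPoly 0 = 0 := rfl

@[simp] theorem fibPoly_one : fibPoly 1 = 1 := rfl

theorem fibPoly_add_two (n : ℕ) : fibPoly (n + 2) = X * fibPoly (n + 1) + fibPoly n := rfl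

theorem fibPoly_add_add_one (m n : ℕ) :
    fibPoly (m + n + 1) = fibPoly (m + 1) * fibPoly (n + 1) + fibPoly m * fibPoly n := by
  induction n using Nat.twoStepInduction with
  | zero => simp
  | one => simp [fibPoly_add_two, mul_comm]
  | more n ih₁ ih₂ =>
    rw [show m + (n + 2) + 1 = m + n + 1 + 2 by ring, fibPoly_add_two, ih₁,
      show m + n + 1 + 1 = m + (n + 1) + 1 by ring, ih₂, fibPoly_add_two (n + 1),
      fibPoly_add_two n]
    ring

theorem fibPoly_add_two_mul_sub_sq (n : ℕ) :
    fibPoly (n + 2) * fibPoly n - fibPoly (n + 1) ^ 2 = (-1) ^ (n + 1) := by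
  induction n with
  | zero => simp [fibPoly_add_two]
  | succ n ih =>
    rw [fibPoly_add_two (n + 1), fibPoly_add_two n] at *
    linear_combination -ih

/-- The Lucas polynomial, equal to `fibPoly (n + 1) + fibPoly (n - 1)` for `n ≥ 1`. -/
noncomputable def lucasPoly (n : ℕ) : ℤ[X] := 2 * fibPoly (n + 1) - X * fibPoly n

theorem fibPoly_two_mul (n : ℕ) : fibPoly (2 * n) = fibPoly n * lucasPoly n := by
  cases n with
  | zero => simp
  | succ n =>
    rw [show 2 * (n + 1) = n + (n + 1) + 1 by ring, fibPoly_add_add_one, lucasPoly,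
      fibPoly_add_two]
    ring

theorem lucasPoly_two_mul (n : ℕ) : lucasPoly (2 * n) = lucasPoly n ^ 2 - 2 * (-1) ^ n := by
  have h := fibPoly_add_two_mul_sub_sq n
  rw [fibPoly_add_two, pow_succ (-1 : ℤ[X])] at h
  rw [lucasPoly, fibPoly_two_mul, show 2 * n + 1 = n + n + 1 by ring, fibPoly_add_add_one,
    lucasPoly]
  linear_combination 2 * h

@[simp] theorem taylor_ofNat {R : Type*} [CommSemiring R] (r : R) (k : ℕ) [k.AtLeastTwo] :
    taylor r (ofNat(k) : R[X]) = ofNat(k) :=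
  map_ofNat (taylorAlgHom r) k

theorem factorial_mul_taylor_coeff {R : Type*} [Semiring R] (k : ℕ) (p : R[X]) (r : R) :
    k.factorial * (taylor r p).coeff k = (derivative^[k] p).eval r := by
  rw [taylor_coeff, ← factorial_smul_hasseDeriv, LinearMap.smul_apply, eval_smul, nsmul_eq_mul]

theorem SModEq.coeff_eq_of_lt {R : Type*} [CommRing R] {p q : R[X]} {N k : ℕ}
    (h : p ≡ q [SMOD Ideal.span {X ^ N}]) (hk : k < N) : p.coeff k = q.coeff k := by
  rw [SModEq.sub_mem, Ideal.mem_span_singleton, X_pow_dvd_iff] at h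
  simpa [sub_eq_zero] using h k hk

theorem exists_smodEq_add_intCast_mul_of_dvd_coeff {a : ℤ} {p q : ℤ[X]} {N : ℕ}
    (h : ∀ k < N, a ∣ (p - q).coeff k) :
    ∃ r : ℤ[X], p ≡ q + a * r [SMOD Ideal.span {X ^ N}] := by
  refine ⟨∑ k ∈ Finset.range N, C ((p - q).coeff k / a) * X ^ k, ?_⟩
  rw [SModEq.sub_mem, Ideal.mem_span_singleton, X_pow_dvd_iff]
  intro d hd
  have hdiv := Int.mul_ediv_cancel' (h d hd)
  simp only [coeff_sub] at hdiv
  simp [finsetSum_coeff, hd, hdiv]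

def FibLucasJet (I : Ideal ℤ[X]) (s m : ℤ) (n : ℕ) : Prop :=
  ∃ ρ γ : ℤ[X],
    taylor s (fibPoly n) ≡ (m : ℤ[X]) * (2 * X ^ 2 + 2 * X ^ 3 + 4 * ρ) [SMOD I] ∧
      taylor s (lucasPoly n) ≡ 2 + 4 * (m : ℤ[X]) * γ [SMOD I]

theorem FibLucasJet.two_mul {I : Ideal ℤ[X]} {s m : ℤ} {n : ℕ} (hn : Even n)
    (h : FibLucasJet I s m n) : FibLucasJet I s (2 * m) (2 * n) := by
  obtain ⟨ρ, γ, hF, hL⟩ := h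
  refine ⟨ρ + (m : ℤ[X]) * γ * (X ^ 2 + X ^ 3 + 2 * ρ), 2 * γ + 2 * (m : ℤ[X]) * γ ^ 2,
    ?_, ?_⟩
  · calc taylor s (fibPoly (2 * n))
        = taylor s (fibPoly n) * taylor s (lucasPoly n) := by rw [fibPoly_two_mul, taylor_mul]
      _ ≡ _ [SMOD I] := hF.mul hL
      _ = _ := by push_cast; ring
  · calc taylor s (lucasPoly (2 * n))
        = taylor s (lucasPoly n) ^ 2 - 2 := by simp [lucasPoly_two_mul, hn.neg_one_pow]
      _ ≡ _ [SMOD I] := (hL.pow 2).sub SModEq.rfl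
      _ = _ := by push_cast; ring

theorem fibLucasJet_six {s : ℤ} (hs : Odd s) : FibLucasJet (Ideal.span {X ^ 4}) s 1 6 := by
  have hF : fibPoly 6 = X ^ 5 + C 4 * X ^ 3 + C 3 * X := by
    simp only [fibPoly_add_two, Nat.reduceAdd, fibPoly_one, fibPoly_zero, map_ofNat]; ring
  have hL : lucasPoly 6 = X ^ 6 + C 6 * X ^ 4 + C 9 * X ^ 2 + C 2 := by
    simp only [lucasPoly, fibPoly_add_two, Nat.reduceAdd, fibPoly_one, fibPoly_zero, map_ofNat]
    ring
  have hdvd : ∀ k < 4, 4 ∣ (taylor s (fibPoly 6) - (2 * X ^ 2 + 2 * X ^ 3)).coeff k ∧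
      4 ∣ (taylor s (lucasPoly 6) - 2).coeff k := by
    intro k hk
    rw [hF, hL]
    interval_cases k <;>
    simp only [map_add, taylor_mul, taylor_C, taylor_X_pow, taylor_X, coeff_add, coeff_sub,
      coeff_C_mul, coeff_X_add_C_pow, coeff_X, coeff_C, coeff_ofNat_mul, coeff_X_pow,
      coeff_ofNat_zero] <;>
    norm_num [Nat.choose] <;>
    obtain ⟨t, rfl⟩ := hs <;>
    -- after `s = 2 * t + 1` every coefficient is a polynomial in `t` that vanishes modulo 4
    constructor <;>
    exact (ZMod.intCast_zmod_eq_zero_iff_dvd _ 4).1 (by push_cast; ring_nf; reduce_mod_char)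
  obtain ⟨ρ, hρ⟩ := exists_smodEq_add_intCast_mul_of_dvd_coeff fun k hk => (hdvd k hk).1
  obtain ⟨γ, hγ⟩ := exists_smodEq_add_intCast_mul_of_dvd_coeff fun k hk => (hdvd k hk).2
  refine ⟨ρ, γ, ?_, ?_⟩
  · convert hρ using 2; push_cast; ring
  · convert hγ using 2; push_cast; ring

theorem fibLucasJet_three_mul_two_pow {s : ℤ} (hs : Odd s) (k : ℕ) :
    FibLucasJet (Ideal.span {X ^ 4}) s (2 ^ k) (3 * 2 ^ (k + 1)) := by
  induction k with
  | zero => simpa using fibLucasJet_six hs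
  | succ k ih =>
    have h := ih.two_mul ⟨3 * 2 ^ k, by ring⟩
    rwa [← pow_succ', show 2 * (3 * 2 ^ (k + 1)) = 3 * 2 ^ (k + 1 + 1) by ring] at h

theorem two_mul_taylor_fibPoly_add_one (s : ℤ) (n : ℕ) :
    2 * taylor s (fibPoly (n + 1)) =
      taylor s (lucasPoly n) + (X + C s) * taylor s (fibPoly n) := by
  simp [lucasPoly]

theorem taylor_fibPoly_add_two (s : ℤ) (n : ℕ) :
    taylor s (fibPoly (n + 2)) =
      (X + C s) * taylor s (fibPoly (n + 1)) + taylor s (fibPoly n) := by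
  simp [fibPoly_add_two]

theorem fibPoly_third_deriv_eval_odd (s : ℤ) (hs : Odd s) (l : ℕ) (hl : 1 ≤ l) :
    (derivative (derivative (derivative (fibPoly (3 * 2 ^ l))))).eval s ≡ 0
      [ZMOD (2 : ℤ) ^ (l + 1)] ∧
    (derivative (derivative (derivative (fibPoly (3 * 2 ^ l + 1))))).eval s ≡ 0
      [ZMOD (2 : ℤ) ^ (l + 1)] ∧
    (derivative (derivative (derivative (fibPoly (3 * 2 ^ l + 2))))).eval s ≡ 2 ^ l
      [ZMOD (2 : ℤ) ^ (l + 1)] := by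
  obtain ⟨k, rfl⟩ := Nat.exists_eq_add_of_le' hl
  obtain ⟨ρ, γ, hF, hL⟩ := fibLucasJet_three_mul_two_pow hs k
  have h₁ := hL.add ((SModEq.refl (X + C s)).mul hF)
  rw [← two_mul_taylor_fibPoly_add_one] at h₁
  have h₂ := ((SModEq.refl (X + C s)).mul h₁).add ((SModEq.refl 2).mul hF)
  rw [mul_left_comm, ← mul_add, ← taylor_fibPoly_add_two] at h₂
  generalize hM : (2 : ℤ) ^ k = M at hF h₁ h₂
  have c₀ := hF.coeff_eq_of_lt (k := 3) (by norm_num)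
  have c₁ := h₁.coeff_eq_of_lt (k := 3) (by norm_num)
  have c₂ := h₂.coeff_eq_of_lt (k := 3) (by norm_num)
  simp only [coeff_intCast_mul, Int.cast_eq, coeff_add, coeff_ofNat_mul, coeff_X_pow,
    Nat.succ_ne_self, ↓reduceIte, mul_zero, mul_one, zero_add, mul_assoc, eq_intCast, add_mul,
    coeff_ofNat_succ, coeff_X_mul, Nat.reduceEqDiff, add_zero, OfNat.one_ne_ofNat] at c₀ c₁ c₂
  have h₆ (p : ℤ[X]) :
      (derivative (derivative (derivative p))).eval s = 6 * (taylor s p).coeff 3 :=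
    (factorial_mul_taylor_coeff 3 p s).symm
  rw [h₆, h₆, h₆, pow_succ, pow_succ, hM]
  obtain ⟨t, rfl⟩ := hs
  refine ⟨?_, ?_, ?_⟩
  · exact Int.modEq_zero_iff_dvd.2 ⟨3 + 6 * ρ.coeff 3, by rw [c₀]; ring⟩
  · exact Int.modEq_zero_iff_dvd.2
      ⟨3 * (γ.coeff 3 + ρ.coeff 2 + ρ.coeff 3 + 2 * t * ρ.coeff 3 + t + 1),
        by linear_combination 3 * c₁⟩
  · refine (Int.modEq_iff_dvd.2 ⟨3 * (γ.coeff 2 + ρ.coeff 1 + 2 * (2 * t + 1) * ρ.coeff 2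
      + (2 * t + 1) * γ.coeff 3 + (2 * t + 1) ^ 2 * ρ.coeff 3 + 2 * ρ.coeff 3 + 1)
      + 6 * t ^ 2 + 12 * t + 4, by linear_combination 3 * c₂⟩).symm
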